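/- arXiv:2605.05993 — 3 statements merged into one kernel-verified Lean document; each statement's English description precedes it below -/
import Mathlib

section
/- Let h : ℝ × ℝ → ℝ be such that for every fixed z, the map η ↦ h(z, η) is continuous and strictly increasing. Let η be a random variable with continuous strictly increasing CDF F_η, independent of a random variable Z. Define X = h(Z, η). Then for all x, the conditional CDF satisfies F_{X|Z}(x | z) = F_η(h⁻¹(z, x)), where h⁻¹(z, ·) denotes the inverse of η ↦ h(z, η). -/
open MeasureTheory ProbabilityTheory Set Filter Topology

/-- Step 1 of the control function identification: with `X = h(Z, η)`, `Z ⟂ η`, and `h(z,·)`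
continuous and strictly increasing with inverse `hinv z`, the conditional CDF of `X` given
`Z = z` equals `F_η (hinv z x)`. -/
theorem first_stage_conditional_cdf
    {Ω : Type*} [MeasurableSpace Ω] (P : Measure Ω) [IsProbabilityMeasure P]
    (Z η : Ω → ℝ) (hZ : Measurable Z) (hη : Measurable η)
    (hindep : IndepFun Z η P)
    (h : ℝ → ℝ → ℝ) (hmeas : Measurable (Function.uncurry h))
    (hmono : ∀ z, StrictMono (h z)) (hcont : ∀ z, Continuous (h z))
    (hinv : ℝ → ℝ → ℝ)
    (hinv_left : ∀ z t, hinv z (h z t) = t)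
    (hinv_right : ∀ z x, h z (hinv z x) = x)
    (Fη : ℝ → ℝ) (hF : ∀ t, Fη t = (P {ω | η ω ≤ t}).toReal)
    (hFcont : Continuous Fη) (hFmono : StrictMono Fη)
    (X : Ω → ℝ) (hX : X = fun ω => h (Z ω) (η ω)) :
    ∀ᵐ z ∂(P.map Z), ∀ x, (condDistrib X Z P z (Set.Iic x)).toReal = Fη (hinv z x) := by
  have hXmeas : Measurable X := by
    rw [hX]; exact hmeas.comp (hZ.prodMk hη)
  -- the candidate kernel
  set μη : Measure ℝ := P.map η with hμη
  have hzmeas : ∀ z, Measurable (h z) :=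
    fun z => hmeas.comp (measurable_const.prodMk measurable_id)
  have hκmeas : Measurable fun z => μη.map (h z) := by
    refine Measure.measurable_of_measurable_coe _ fun s hs => ?_
    have h1 : ∀ z, μη.map (h z) s = ∫⁻ t, s.indicator (fun _ => (1 : ENNReal)) (h z t) ∂μη := by
      intro z
      rw [Measure.map_apply (hzmeas z) hs, ← lintegral_indicator_one ((hzmeas z) hs)]
      refine lintegral_congr fun t => ?_
      rw [← Set.indicator_comp_right (h z)]
      rfl
    simp_rw [h1]
    exact Measurable.lintegral_prod_right' (f := fun p : ℝ × ℝ =>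
      s.indicator (fun _ => (1 : ENNReal)) (h p.1 p.2))
      (((measurable_indicator_const_iff 1).mpr hs).comp hmeas)
  set κ : Kernel ℝ ℝ := ⟨fun z => μη.map (h z), hκmeas⟩ with hκ
  have hκapp : ∀ z, κ z = μη.map (h z) := fun _ => rfl
  have : IsMarkovKernel κ := by
    constructor
    intro z
    rw [hκapp]
    have : IsProbabilityMeasure μη := Measure.isProbabilityMeasure_map hη.aemeasurable
    exact Measure.isProbabilityMeasure_map (hzmeas z).aemeasurable
  -- joint law as compProd
  have hjoint : P.map (fun ω => (Z ω, X ω)) = (P.map Z) ⊗ₘ κ := by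
    have hprod : P.map (fun ω => (Z ω, η ω)) = (P.map Z).prod μη :=
      (indepFun_iff_map_prod_eq_prod_map_map hZ.aemeasurable hη.aemeasurable).mp hindep
    have hm : Measurable fun p : ℝ × ℝ => (p.1, h p.1 p.2) :=
      measurable_fst.prodMk hmeas
    have hmap2 : P.map (fun ω => (Z ω, X ω)) =
        (P.map (fun ω => (Z ω, η ω))).map (fun p : ℝ × ℝ => (p.1, h p.1 p.2)) := by
      rw [Measure.map_map hm (hZ.prodMk hη)]
      rw [hX]; rfl
    ext s hs
    rw [hmap2, hprod, Measure.map_apply hm hs,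
      Measure.compProd_apply hs,
      Measure.prod_apply (hm hs)]
    refine lintegral_congr fun z => ?_
    rw [hκapp, Measure.map_apply (hzmeas z) (measurable_prodMk_left hs)]
    rfl
  have hfst : (P.map (fun ω => (Z ω, X ω))).fst = P.map Z :=
    Measure.fst_map_prodMk hXmeas
  have huniq : ∀ᵐ z ∂(P.map Z), κ z = condDistrib X Z P z := by
    rw [condDistrib, ← hfst]
    exact eq_condKernel_of_measure_eq_compProd κ (by rw [hfst, ← hjoint])
  filter_upwards [huniq] with z hz x
  rw [← hz, hκapp, Measure.map_apply (hzmeas z) measurableSet_Iic,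
    hμη, Measure.map_apply hη (measurableSet_Iic.preimage (hzmeas z)), hF]
  have hset : η ⁻¹' (h z ⁻¹' Set.Iic x) = {ω | η ω ≤ hinv z x} := by
    ext ω
    simp only [Set.mem_preimage, Set.mem_Iic, Set.mem_setOf_eq]
    conv_lhs => rw [← hinv_right z x]
    exact (hmono z).le_iff_le
  rw [hset]
end

section
/- Let Z, η be independent random variables, h(z, ·) continuous and strictly increasing for each z, F_η the continuous strictly increasing CDF of η, and X = h(Z, η). Define V = F_{X|Z}(X | Z). Then V = F_η(η) almost surely; consequently V is Uniform[0,1] and V is independent of Z. -/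
/-!
Because `η` is independent of `Z`, the conditional law of `X = h(Z, η)` given `Z = z` is the law
of `η` pushed forward by `h z`. As `h z` is strictly increasing, `{h z ≤ h z e} = {· ≤ e}`, so
`F_{X|Z}(X | Z) = F_η(η)` almost surely. A continuous strictly increasing CDF takes every value
of `(0, 1)` exactly once, which makes `F_η(η)` uniform on `[0, 1]` (probability integral
transform); being a function of `η`, it is independent of `Z`.
-/

open MeasureTheory ProbabilityTheory Set Filter Topology

lemma StrictMono.preimage_Iic_apply {α β : Type*} [LinearOrder α] [Preorder β] {g : α → β}
    (hg : StrictMono g) (x : α) : g ⁻¹' Iic (g x) = Iic x := by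
  ext y
  simp [hg.le_iff_le]

section IndependentNoise

variable {α β γ Ω : Type*} [MeasurableSpace α] [MeasurableSpace β] [MeasurableSpace γ]
  [MeasurableSpace Ω]

lemma ProbabilityTheory.Kernel.map_id_prod_const_apply (ν : Measure β) [SFinite ν]
    {f : α → β → γ} (hf : Measurable (Function.uncurry f)) (z : α) :
    (Kernel.id ×ₖ Kernel.const α ν).map (Function.uncurry f) z = ν.map (f z) := by
  rw [Kernel.map_apply _ hf, Kernel.prod_apply, Kernel.id_apply, Kernel.const_apply,
    Measure.dirac_prod, Measure.map_map hf measurable_prodMk_left]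
  rfl

lemma MeasureTheory.Measure.map_prod_eq_compProd (μ : Measure α) (ν : Measure β) [SFinite μ]
    [SFinite ν] {f : α → β → γ} (hf : Measurable (Function.uncurry f)) :
    (μ.prod ν).map (fun p ↦ (p.1, f p.1 p.2)) =
      μ ⊗ₘ (Kernel.id ×ₖ Kernel.const α ν).map (Function.uncurry f) := by
  have hφ : Measurable (fun p : α × β ↦ (p.1, f p.1 p.2)) := measurable_fst.prodMk hf
  ext s hs
  rw [Measure.map_apply hφ hs, Measure.prod_apply (hφ hs), Measure.compProd_apply hs]
  refine lintegral_congr fun z ↦ ?_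
  have hfz : Measurable (f z) := hf.comp measurable_prodMk_left
  rw [Kernel.map_id_prod_const_apply ν hf, Measure.map_apply hfz (measurable_prodMk_left hs)]
  rfl

theorem ProbabilityTheory.condDistrib_ae_eq_map_of_indepFun [StandardBorelSpace γ] [Nonempty γ]
    {P : Measure Ω} [IsFiniteMeasure P] {Z : Ω → α} {η : Ω → β} {f : α → β → γ}
    (hZ : Measurable Z) (hη : Measurable η) (hf : Measurable (Function.uncurry f))
    (hind : Z ⟂ᵢ[P] η) :
    ∀ᵐ z ∂P.map Z, condDistrib (fun ω ↦ f (Z ω) (η ω)) Z P z = (P.map η).map (f z) := by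
  have hjoint : P.map (fun ω ↦ (Z ω, f (Z ω) (η ω))) =
      P.map Z ⊗ₘ (Kernel.id ×ₖ Kernel.const α (P.map η)).map (Function.uncurry f) := by
    rw [← Measure.map_prod_eq_compProd _ _ hf,
      ← (indepFun_iff_map_prod_eq_prod_map_map hZ.aemeasurable hη.aemeasurable).mp hind,
      Measure.map_map (g := fun p : α × β ↦ (p.1, f p.1 p.2)) (measurable_fst.prodMk hf)
        (hZ.prodMk hη)]
    rfl
  filter_upwards [condDistrib_ae_eq_of_measure_eq_compProd_of_measurable hZ
    (hf.comp (hZ.prodMk hη)) hjoint] with z hz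
  exact hz.trans (Kernel.map_id_prod_const_apply _ hf z)

end IndependentNoise

namespace ProbabilityTheory

variable {μ : Measure ℝ}

lemma cdf_pos_of_strictMono (hμ : StrictMono (cdf μ)) (x : ℝ) : 0 < cdf μ x :=
  (cdf_nonneg μ (x - 1)).trans_lt (hμ (sub_one_lt x))

lemma cdf_lt_one_of_strictMono (hμ : StrictMono (cdf μ)) (x : ℝ) : cdf μ x < 1 :=
  (hμ (lt_add_one x)).trans_le (cdf_le_one μ _)

lemma exists_cdf_eq_of_continuous (hμ : Continuous (cdf μ)) {t : ℝ} (ht : t ∈ Ioo 0 1) :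
    ∃ x, cdf μ x = t :=
  mem_range_of_exists_le_of_exists_ge hμ
    ((tendsto_cdf_atBot μ).eventually_le_const ht.1).exists
    ((tendsto_cdf_atTop μ).eventually_const_le ht.2).exists

lemma measure_cdf_preimage_Iic [IsProbabilityMeasure μ] (hc : Continuous (cdf μ))
    (hm : StrictMono (cdf μ)) (t : ℝ) :
    μ (cdf μ ⁻¹' Iic t) = ENNReal.ofReal (min 1 t) := by
  rcases le_or_gt t 0 with ht0 | ht0
  · have hempty : cdf μ ⁻¹' Iic t = ∅ :=
      eq_empty_of_forall_notMem fun x hx ↦ (ht0.trans_lt (cdf_pos_of_strictMono hm x)).not_ge hx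
    rw [hempty, measure_empty, ENNReal.ofReal_of_nonpos (min_le_of_right_le ht0)]
  rcases le_or_gt 1 t with ht1 | ht1
  · have huniv : cdf μ ⁻¹' Iic t = univ :=
      eq_univ_of_forall fun x ↦ (cdf_lt_one_of_strictMono hm x).le.trans ht1
    rw [huniv, measure_univ, min_eq_left ht1, ENNReal.ofReal_one]
  obtain ⟨x, rfl⟩ := exists_cdf_eq_of_continuous hc ⟨ht0, ht1⟩
  rw [hm.preimage_Iic_apply, ← ofReal_cdf, min_eq_right ht1.le]

theorem map_cdf_eq_volume_restrict_Icc [IsProbabilityMeasure μ] (hc : Continuous (cdf μ))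
    (hm : StrictMono (cdf μ)) :
    μ.map (cdf μ) = volume.restrict (Icc 0 1) := by
  have := Measure.isProbabilityMeasure_map (μ := μ) hc.measurable.aemeasurable
  refine Measure.ext_of_Iic _ _ fun t ↦ ?_
  rw [Measure.map_apply hc.measurable measurableSet_Iic, measure_cdf_preimage_Iic hc hm,
    Measure.restrict_apply measurableSet_Iic, inter_comm, ← Ici_inter_Iic, inter_assoc,
    Iic_inter_Iic, Ici_inter_Iic, Real.volume_Icc, sub_zero]

lemma cdf_map_apply {Ω : Type*} [MeasurableSpace Ω] {P : Measure Ω} [IsProbabilityMeasure P]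
    {η : Ω → ℝ} (hη : Measurable η) (t : ℝ) :
    cdf (P.map η) t = (P {ω | η ω ≤ t}).toReal := by
  have := Measure.isProbabilityMeasure_map (μ := P) hη.aemeasurable
  rw [cdf_eq_real, measureReal_def, Measure.map_apply hη measurableSet_Iic]
  rfl

end ProbabilityTheory

theorem control_variable_uniform_indep_general
    {Ω : Type*} [MeasurableSpace Ω] (P : Measure Ω) [IsProbabilityMeasure P]
    (Z η : Ω → ℝ) (hZ : Measurable Z) (hη : Measurable η)
    (hindep : IndepFun Z η P)
    (h : ℝ → ℝ → ℝ) (hmeas : Measurable (Function.uncurry h))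
    (hmono : ∀ z, StrictMono (h z))
    (Fη : ℝ → ℝ) (hF : ∀ t, Fη t = (P {ω | η ω ≤ t}).toReal)
    (hFcont : Continuous Fη) (hFmono : StrictMono Fη)
    (X : Ω → ℝ) (hX : X = fun ω => h (Z ω) (η ω))
    (V : Ω → ℝ)
    (hV : V = fun ω => (condDistrib X Z P (Z ω) (Set.Iic (X ω))).toReal) :
    (V =ᵐ[P] fun ω => Fη (η ω)) ∧
      P.map V = volume.restrict (Set.Icc (0:ℝ) 1) ∧
      IndepFun V Z P := by
  obtain rfl : Fη = cdf (P.map η) := funext fun t ↦ (hF t).trans (cdf_map_apply hη t).symm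
  have hVeq : V =ᵐ[P] fun ω ↦ cdf (P.map η) (η ω) := by
    filter_upwards [ae_of_ae_map hZ.aemeasurable
      (condDistrib_ae_eq_map_of_indepFun hZ hη hmeas hindep)] with ω hω
    have hhz : Measurable (h (Z ω)) := hmeas.comp measurable_prodMk_left
    subst hV hX
    dsimp only
    rw [hω, Measure.map_apply hhz measurableSet_Iic, (hmono _).preimage_Iic_apply,
      Measure.map_apply hη measurableSet_Iic, cdf_map_apply hη]
    rfl
  refine ⟨hVeq, ?_, ?_⟩
  · have := Measure.isProbabilityMeasure_map (μ := P) hη.aemeasurable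
    rw [Measure.map_congr hVeq]
    exact (Measure.map_map hFcont.measurable hη).symm.trans
      (map_cdf_eq_volume_restrict_Icc hFcont hFmono)
  · exact (hindep.symm.comp hFcont.measurable measurable_id).congr hVeq.symm .rfl

/-- The control variable `V = F_{X∣Z}(X ∣ Z)` equals `F_η(η)` a.s., is `Uniform[0,1]`,
and is independent of the instrument `Z`. -/
theorem control_variable_uniform_indep
    {Ω : Type*} [MeasurableSpace Ω] (P : Measure Ω) [IsProbabilityMeasure P]
    (Z η : Ω → ℝ) (hZ : Measurable Z) (hη : Measurable η)
    (hindep : IndepFun Z η P)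
    (h : ℝ → ℝ → ℝ) (hmeas : Measurable (Function.uncurry h))
    (hmono : ∀ z, StrictMono (h z)) (hcont : ∀ z, Continuous (h z))
    (Fη : ℝ → ℝ) (hF : ∀ t, Fη t = (P {ω | η ω ≤ t}).toReal)
    (hFcont : Continuous Fη) (hFmono : StrictMono Fη)
    (X : Ω → ℝ) (hX : X = fun ω => h (Z ω) (η ω))
    (V : Ω → ℝ)
    (hV : V = fun ω => (condDistrib X Z P (Z ω) (Set.Iic (X ω))).toReal) :
    (V =ᵐ[P] fun ω => Fη (η ω)) ∧
      P.map V = volume.restrict (Set.Icc (0:ℝ) 1) ∧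
      IndepFun V Z P :=
  control_variable_uniform_indep_general P Z η hZ hη hindep h hmeas hmono Fη hF hFcont hFmono X hX V
    hV
end

section
/- Let ε, η, Z be random variables with Z independent of the pair (ε, η), and let X = h(Z, η) for a measurable function h. Then ε is conditionally independent of X given η. -/
open MeasureTheory ProbabilityTheory Set

/-!
Since `Z` is independent of `(ε, η)`, for `A ∈ σ(ε)`, `B ∈ σ(Z)`, `C ∈ σ(η)` we get
`P(A ∩ B ∩ C) = P(B) P(A ∩ C)`, i.e. `P[A ∩ B | η] = P(B) P[A | η]` and `P[B | η] = P(B)`.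
Pulling out the `σ(η)`-measurable factor `1_C` then gives
`P[A ∩ (B ∩ C) | η] = P[A | η] P[B ∩ C | η]`. The sets `B ∩ C` form a π-system generating
`σ(Z, η)`, so `ε ⟂ (Z, η) | η`, and `X = h(Z, η)` inherits this.
-/

namespace MeasurableSpace

variable {Ω : Type*}

lemma isPiSystem_image2_inter (m₁ m₂ : MeasurableSpace Ω) :
    IsPiSystem (image2 (· ∩ ·) {s | MeasurableSet[m₁] s} {t | MeasurableSet[m₂] t}) := by
  rintro _ ⟨s, hs, t, ht, rfl⟩ _ ⟨s', hs', t', ht', rfl⟩ -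
  exact ⟨s ∩ s', hs.inter hs', t ∩ t', ht.inter ht', inter_inter_inter_comm s s' t t'⟩

lemma sup_eq_generateFrom_image2_inter (m₁ m₂ : MeasurableSpace Ω) :
    m₁ ⊔ m₂ =
      generateFrom (image2 (· ∩ ·) {s | MeasurableSet[m₁] s} {t | MeasurableSet[m₂] t}) := by
  refine le_antisymm (sup_le (fun s hs ↦ ?_) (fun t ht ↦ ?_)) (generateFrom_le ?_)
  · exact measurableSet_generateFrom ⟨s, hs, univ, @MeasurableSet.univ _ m₂, inter_univ s⟩
  · exact measurableSet_generateFrom ⟨univ, @MeasurableSet.univ _ m₁, t, ht, univ_inter t⟩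
  · rintro _ ⟨s, hs, t, ht, rfl⟩
    exact (le_sup_left (b := m₂) s hs).inter (le_sup_right (a := m₁) t ht)

end MeasurableSpace

open MeasurableSpace

namespace ProbabilityTheory

variable {Ω : Type*} {m m₁ m₂ mΩ : MeasurableSpace Ω} {μ : Measure Ω} [IsFiniteMeasure μ]

lemma condExp_inter_ae_eq_indicator {s t : Set Ω} (hs : MeasurableSet[m] s)
    (ht : MeasurableSet t) :
    μ⟦s ∩ t | m⟧ =ᵐ[μ] s.indicator (μ⟦t | m⟧) := by
  rw [← indicator_indicator]
  exact condExp_indicator ((integrable_const (1 : ℝ)).indicator ht) hs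

lemma condExp_inter_ae_eq_measureReal_mul_of_indep (hm : m ≤ mΩ) (h₁ : m₁ ≤ mΩ) (h₂ : m₂ ≤ mΩ)
    (hindep : Indep m₂ (m₁ ⊔ m) μ) {s t : Set Ω} (hs : MeasurableSet[m₁] s)
    (ht : MeasurableSet[m₂] t) :
    μ⟦s ∩ t | m⟧ =ᵐ[μ] fun ω ↦ μ.real t * (μ⟦s | m⟧) ω := by
  have hst : MeasurableSet (s ∩ t) := (h₁ s hs).inter (h₂ t ht)
  refine (ae_eq_condExp_of_forall_setIntegral_eq hm ((integrable_const (1 : ℝ)).indicator hst)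
    (fun u _ _ ↦ (integrable_condExp.const_mul _).integrableOn) (fun u hu _ ↦ ?_)
    (stronglyMeasurable_condExp.const_mul _).aestronglyMeasurable).symm
  have hsu : MeasurableSet[m₁ ⊔ m] (s ∩ u) :=
    (le_sup_left (b := m) s hs).inter (le_sup_right (a := m₁) u hu)
  calc ∫ ω in u, μ.real t * (μ⟦s | m⟧) ω ∂μ
      = μ.real t * μ.real (s ∩ u) := by
        rw [integral_const_mul,
          setIntegral_condExp hm ((integrable_const (1 : ℝ)).indicator (h₁ s hs)) hu,
          setIntegral_indicator (h₁ s hs)]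
        simp [inter_comm]
    _ = μ.real (t ∩ (s ∩ u)) := by
        simp only [measureReal_def, (Indep_iff _ _ μ).1 hindep t _ ht hsu, ENNReal.toReal_mul]
    _ = ∫ ω in u, (s ∩ t).indicator (fun _ ↦ (1 : ℝ)) ω ∂μ := by
        rw [setIntegral_indicator hst]
        simp [inter_comm, inter_left_comm]

lemma condIndep_sup_right_of_indep [StandardBorelSpace Ω] (hm : m ≤ mΩ) (h₁ : m₁ ≤ mΩ)
    (h₂ : m₂ ≤ mΩ) (hindep : Indep m₂ (m₁ ⊔ m) μ) :
    CondIndep m m₁ (m₂ ⊔ m) hm μ := by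
  refine CondIndepSets.condIndep h₁ (sup_le h₂ hm) (@isPiSystem_measurableSet Ω m₁)
    (isPiSystem_image2_inter m₂ m) (@generateFrom_measurableSet Ω m₁).symm
    (sup_eq_generateFrom_image2_inter m₂ m) ?_
  refine (condIndepSets_iff m hm _ _ (fun s hs ↦ h₁ s hs)
    (by rintro _ ⟨t, ht, u, hu, rfl⟩; exact (h₂ t ht).inter (hm u hu)) μ).2 ?_
  rintro s _ (hs : MeasurableSet[m₁] s) ⟨t, ht, u, hu, rfl⟩
  dsimp only
  rw [show s ∩ (t ∩ u) = u ∩ (s ∩ t) by rw [inter_comm t u, inter_left_comm], inter_comm t u]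
  filter_upwards [condExp_inter_ae_eq_indicator hu ((h₁ s hs).inter (h₂ t ht)),
    condExp_inter_ae_eq_indicator hu (h₂ t ht),
    condExp_inter_ae_eq_measureReal_mul_of_indep hm h₁ h₂ hindep hs ht,
    condExp_inter_ae_eq_measureReal_mul_of_indep hm h₁ h₂ hindep MeasurableSet.univ ht]
    with ω hust hut hst hunivt
  simp only [univ_inter, indicator_univ, condExp_const hm, mul_one] at hunivt
  by_cases hω : ω ∈ u
  · simp [hust, hut, hst, hunivt, hω, mul_comm]
  · simp [hust, hut, hω]

theorem condIndepFun_prodMk_right_of_indepFun [StandardBorelSpace Ω] {β γ δ : Type*}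
    [mβ : MeasurableSpace β] [mγ : MeasurableSpace γ] [mδ : MeasurableSpace δ]
    {f : Ω → β} {g : Ω → δ} {k : Ω → γ} (hf : Measurable f) (hg : Measurable g)
    (hk : Measurable k) (hindep : IndepFun g (fun ω ↦ (f ω, k ω)) μ) :
    CondIndepFun (mγ.comap k) hk.comap_le f (fun ω ↦ (g ω, k ω)) μ := by
  have hindep' : Indep (mδ.comap g) (mβ.comap f ⊔ mγ.comap k) μ := by
    rw [← comap_prodMk]
    exact (IndepFun_iff_Indep g _ μ).1 hindep
  have hcond := condIndep_sup_right_of_indep hk.comap_le hf.comap_le hg.comap_le hindep'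
  rw [← comap_prodMk] at hcond
  exact (condIndepFun_iff_condIndep _ _ f _ μ).2 hcond

end ProbabilityTheory

theorem cf_conditional_independence_general
    {Ω : Type*} [MeasurableSpace Ω] [StandardBorelSpace Ω]
    (P : Measure Ω) [IsProbabilityMeasure P]
    (ε η Z : Ω → ℝ) (hε : Measurable ε) (hη : Measurable η) (hZ : Measurable Z)
    (h : ℝ → ℝ → ℝ) (hmeas : Measurable (Function.uncurry h))
    (hindep : IndepFun Z (fun ω => (ε ω, η ω)) P)
    (X : Ω → ℝ) (hX : X = fun ω => h (Z ω) (η ω)) :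
    CondIndepFun (MeasurableSpace.comap η inferInstance) hη.comap_le ε X P := by
  subst hX
  exact (condIndepFun_prodMk_right_of_indepFun hε hZ hη hindep).comp measurable_id hmeas

/-- Control-function exogeneity: if `Z ⟂ (ε, η)` and `X = h(Z, η)`, then `ε ⟂ X ∣ η`. -/
theorem cf_conditional_independence
    {Ω : Type*} [MeasurableSpace Ω] [StandardBorelSpace Ω] [Nonempty Ω]
    (P : Measure Ω) [IsProbabilityMeasure P]
    (ε η Z : Ω → ℝ) (hε : Measurable ε) (hη : Measurable η) (hZ : Measurable Z)
    (h : ℝ → ℝ → ℝ) (hmeas : Measurable (Function.uncurry h))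
    (hindep : IndepFun Z (fun ω => (ε ω, η ω)) P)
    (X : Ω → ℝ) (hX : X = fun ω => h (Z ω) (η ω)) :
    CondIndepFun (MeasurableSpace.comap η inferInstance) hη.comap_le ε X P :=
  cf_conditional_independence_general P ε η Z hε hη hZ h hmeas hindep X hX
end
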